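/- Let k be a field, let α*: k[[x_1,…,x_n]] → k[[t]] be a local k-algebra homomorphism with ord_t(α*(x_1)) = 1, and let v = ord_t ∘ α*. Then there exist P_i(t) ∈ t·k[[t]] for 2 ≤ i ≤ n such that α*(x_i) = P_i(α*(x_1)) for all 2 ≤ i ≤ n, and for every ψ ∈ k[[x_1,…,x_n]], v(ψ) = ord_t ψ(t, P_2(t), …, P_n(t)). -/

import Mathlib

/-- Substitution of a power series `φ` with zero constant term into a power series `f`:
the image of `f` under the continuous `k`-algebra map `k[[s]] → k[[t]]`, `s ↦ φ`. -/
noncomputable def substPS {k : Type*} [CommRing k] (φ f : PowerSeries k) : PowerSeries k :=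
  PowerSeries.mk fun m =>
    ∑ n ∈ Finset.range (m + 1), PowerSeries.coeff n f * PowerSeries.coeff m (φ ^ n)

/-- Substitution of power series `g i` (each with zero constant term) for the variables of a
multivariate power series `ψ`: the image of `ψ` under the continuous `k`-algebra map
`k[[x_1,…,x_n]] → k[[t]]`, `x_i ↦ g i`. -/
noncomputable def mvSubst {k : Type*} [CommRing k] {n : ℕ} (g : Fin n → PowerSeries k)
    (ψ : MvPowerSeries (Fin n) k) : PowerSeries k :=
  PowerSeries.mk fun m => PowerSeries.coeff m
    (MvPolynomial.aeval g (MvPowerSeries.trunc k (Finsupp.equivFunOnFinite.symm fun _ => m + 1) ψ))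

/-! Since `u = α*(x_1)` has order one it has a compositional inverse `w`, and
`P_i := α*(x_i) ∘ w` satisfies `α*(x_i) = P_i ∘ u`. Continuity of `α*` then gives
`α*(ψ) = ψ(P_1, …, P_n) ∘ u`, and substituting a series of order one preserves order. -/

namespace MvPowerSeries

variable {R σ : Type*} [CommRing R]

theorem coeff_subst_eq_zero_of_lt_order [Finite σ] {g : σ → PowerSeries R}
    (hg : ∀ i, PowerSeries.constantCoeff (g i) = 0) {f : MvPowerSeries σ R} {m : ℕ}
    (hm : m < f.order) : PowerSeries.coeff m (subst g f) = 0 := by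
  have hg1 : 1 ≤ ⨅ i, order (g i) := le_iInf fun i =>
    Order.one_le_iff_ne_zero.mpr (order_ne_zero_iff_constCoeff_eq_zero.mpr (hg i))
  refine PowerSeries.coeff_of_lt_order m ?_
  rw [PowerSeries.order_eq_order]
  calc (m : ℕ∞) < f.order := hm
    _ ≤ (⨅ i, order (g i)) * f.order := le_mul_of_one_le_left zero_le hg1
    _ ≤ _ := le_order_subst (hasSubst_of_constantCoeff_zero hg) f

theorem lt_order_sub_trunc [Finite σ] [Nonempty σ] [DecidableEq σ] (f : MvPowerSeries σ R)
    (m : ℕ) : m < (f - trunc R (Finsupp.equivFunOnFinite.symm fun _ => m + 1) f).order := by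
  refine (ENat.natCast_lt_natCast.mpr m.lt_succ_self).trans_le (le_order fun d hd => ?_)
  have hdm : ∀ i, d i < m + 1 := fun i =>
    (Finsupp.le_degree i d).trans_lt (ENat.natCast_lt_natCast.mp hd)
  have hlt : d < Finsupp.equivFunOnFinite.symm fun _ => m + 1 := by
    refine lt_of_le_of_ne (fun i => (hdm i).le) fun h => ?_
    obtain ⟨i⟩ := ‹Nonempty σ›
    exact (hdm i).ne (DFunLike.congr_fun h i)
  rw [map_sub, MvPolynomial.coeff_coe, coeff_trunc, if_pos hlt, sub_self]

end MvPowerSeries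

namespace PowerSeries

variable {R : Type*} [CommRing R] {u : PowerSeries R}

theorem subst_subst_substInvOfIsUnit (hu : constantCoeff u = 0) (hu1 : IsUnit (coeff 1 u))
    (f : PowerSeries R) : subst u (subst (u.substInvOfIsUnit hu1) f) = f := by
  rw [subst_comp_subst_apply (HasSubst.substInvOfIsUnit u hu1) (HasSubst.of_constantCoeff_zero' hu),
    subst_substInvOfIsUnit_left u hu hu1, X_subst]

theorem order_subst_of_isUnit_coeff_one (hu : constantCoeff u = 0) (hu1 : IsUnit (coeff 1 u))
    (f : PowerSeries R) : order (subst u f) = f.order := by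
  refine le_antisymm ?_ (le_order_subst_left' hu)
  have hinv : f = subst (u.substInvOfIsUnit hu1) (subst u f) := by
    rw [subst_comp_subst_apply (HasSubst.of_constantCoeff_zero' hu)
      (HasSubst.substInvOfIsUnit u hu1), subst_substInvOfIsUnit_right u hu hu1, X_subst]
  conv_rhs => rw [hinv]
  exact le_order_subst_left' (constantCoeff_substInvOfIsUnit u hu1)

end PowerSeries

open PowerSeries

theorem substPS_eq_subst {R : Type*} [CommRing R] {φ : PowerSeries R}
    (hφ : constantCoeff φ = 0) (f : PowerSeries R) : substPS φ f = subst φ f := by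
  ext m
  rw [substPS, coeff_mk, coeff_subst' (HasSubst.of_constantCoeff_zero' hφ)]
  refine (finsum_eq_sum_of_support_subset _ fun d hd => ?_).symm
  rw [Finset.coe_range, Set.mem_Iio, Nat.lt_succ_iff]
  by_contra! hmd
  have hdvd : X ^ d ∣ φ ^ d := pow_dvd_pow_of_dvd (X_dvd_iff.mpr hφ) d
  exact hd (by simp [X_pow_dvd_iff.mp hdvd m hmd])

theorem mvSubst_eq_subst {R : Type*} [CommRing R] {n : ℕ} [NeZero n]
    {g : Fin n → PowerSeries R} (hg : ∀ i, constantCoeff (g i) = 0)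
    (ψ : MvPowerSeries (Fin n) R) : mvSubst g ψ = MvPowerSeries.subst g ψ := by
  ext m
  set T := MvPowerSeries.trunc R (Finsupp.equivFunOnFinite.symm fun _ => m + 1) ψ
  have hsplit : ψ = T + (ψ - T) := (add_sub_cancel _ _).symm
  conv_rhs =>
    rw [hsplit, MvPowerSeries.subst_add (MvPowerSeries.hasSubst_of_constantCoeff_zero hg),
      map_add, MvPowerSeries.subst_coe,
      MvPowerSeries.coeff_subst_eq_zero_of_lt_order hg (MvPowerSeries.lt_order_sub_trunc ψ m),
      add_zero]
  rw [mvSubst, coeff_mk]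

/-- Let `α* : k[[x_1,…,x_n]] → k[[t]]` be a (continuous) local `k`-algebra
homomorphism with `ord_t(α*(x_1)) = 1`, and `v = ord_t ∘ α*`.  Then there exist
`P_i ∈ t·k[[t]]` with `α*(x_i) = P_i(α*(x_1))` for `2 ≤ i ≤ n`, and for every `ψ`,
`v(ψ) = ord_t ψ(t, P_2(t), …, P_n(t))`. -/
theorem nonsingular_arc_normal_form
    (k : Type) [Field k] {n : ℕ} [NeZero n]
    (α : MvPowerSeries (Fin n) k →ₐ[k] PowerSeries k)
    (hloc : ∀ i, PowerSeries.constantCoeff (α (MvPowerSeries.X i)) = 0)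
    (hcont : ∀ ψ, α ψ = mvSubst (fun i => α (MvPowerSeries.X i)) ψ)
    (h1 : (α (MvPowerSeries.X 0)).order = 1) :
    ∃ P : Fin n → PowerSeries k, P 0 = PowerSeries.X ∧
      (∀ i, PowerSeries.constantCoeff (P i) = 0) ∧
      (∀ i : Fin n, i ≠ 0 → α (MvPowerSeries.X i) = substPS (α (MvPowerSeries.X 0)) (P i)) ∧
      ∀ ψ, (α ψ).order = (mvSubst P ψ).order := by
  set u := α (MvPowerSeries.X 0)
  have hu0 : constantCoeff u = 0 := hloc 0
  have hu1 : IsUnit (coeff 1 u) := (order_eq_nat.mp (by exact_mod_cast h1)).1.isUnit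
  set P : Fin n → PowerSeries k := fun i => subst (u.substInvOfIsUnit hu1) (α (MvPowerSeries.X i))
  have hP : ∀ i, constantCoeff (P i) = 0 := fun i =>
    constantCoeff_subst_eq_zero (constantCoeff_substInvOfIsUnit u hu1) _ (hloc i)
  have hαX : (fun i => α (MvPowerSeries.X i)) = fun i => subst u (P i) :=
    funext fun i => (subst_subst_substInvOfIsUnit hu0 hu1 _).symm
  refine ⟨P, subst_substInvOfIsUnit_right u hu0 hu1, hP, fun i _ => ?_, fun ψ => ?_⟩
  · rw [substPS_eq_subst hu0, subst_subst_substInvOfIsUnit hu0 hu1]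
  · have hcomp : MvPowerSeries.subst (fun i => subst u (P i)) ψ =
        subst u (MvPowerSeries.subst P ψ) :=
      (MvPowerSeries.subst_comp_subst_apply (MvPowerSeries.hasSubst_of_constantCoeff_zero hP)
        (HasSubst.of_constantCoeff_zero' hu0).const ψ).symm
    rw [hcont, mvSubst_eq_subst hloc, mvSubst_eq_subst hP, hαX, hcomp,
      order_subst_of_isUnit_coeff_one hu0 hu1]
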